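/- For every real z ≠ 0 and all integers ℓ ≥ p ≥ 0: ((2p+3)/(2(p+1)))·Σ_{k=p+1}^{ℓ} (2k+1)(k−p)_{2p+2}[j_k(z)]² = z²·Σ_{k=p}^{ℓ} (2k+1)(k−p+1)_{2p}[j_k(z)]² − (z²/(2(p+1)))·(ℓ−p+1)_{2p+2}·[j_ℓ(z)]² − (z²/(2(p+1)))·(ℓ−p)_{2p+2}·[j_{ℓ+1}(z)]² + (z/(p+1))·(ℓ−p)_{2p+3}·j_ℓ(z)·j_{ℓ+1}(z). -/

import Mathlib

open Finset

/-- Auxiliary: `sphjAux z n` is the spherical Bessel function `j_{n-1}(z)`. -/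
noncomputable def sphjAux (z : ℝ) : ℕ → ℝ
  | 0 => Real.cos z / z
  | 1 => Real.sin z / z
  | (n + 2) => ((2 * (n : ℝ) + 1) / z) * sphjAux z (n + 1) - sphjAux z n

/-- The spherical Bessel function `j_k(z)` for integer `k ≥ -1`. -/
noncomputable def sphj (k : ℤ) (z : ℝ) : ℝ := sphjAux z (k + 1).toNat

/-- The Pochhammer symbol `(f)_n = f (f+1) ⋯ (f+n-1)`, with `(f)_0 = 1`. -/
noncomputable def poch (f : ℝ) (n : ℕ) : ℝ := ∏ i ∈ Finset.range n, (f + (i : ℝ))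

lemma poch_succ (f : ℝ) (n : ℕ) : poch f (n+1) = poch f n * (f + n) :=
  Finset.prod_range_succ _ _

lemma poch_succ' (f : ℝ) (n : ℕ) : poch f (n+1) = f * poch (f+1) n := by
  unfold poch
  rw [Finset.prod_range_succ']
  simp only [Nat.cast_zero, add_zero]
  rw [mul_comm]
  congr 1
  refine Finset.prod_congr rfl fun i _ => ?_
  push_cast
  ring

lemma pochA (x : ℝ) (p : ℕ) :
    poch x (2*p+2) = x * (x + 2*(p:ℝ) + 1) * poch (x+1) (2*p) := by
  rw [show 2*p+2 = (2*p+1)+1 by omega, poch_succ, poch_succ']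
  push_cast; ring

lemma pochT2 (x : ℝ) (p : ℕ) :
    poch x (2*p+2) = poch x (2*p) * (x + 2*(p:ℝ)) * (x + 2*(p:ℝ) + 1) := by
  rw [show 2*p+2 = (2*p+1)+1 by omega, poch_succ, poch_succ]
  push_cast; ring

lemma pochC (x : ℝ) (p : ℕ) :
    poch x (2*p+2) = x * (x+1) * poch (x+2) (2*p) := by
  rw [show 2*p+2 = (2*p+1)+1 by omega, poch_succ', poch_succ',
    show x+1+1 = x+2 by ring]
  ring

lemma pochB (x : ℝ) (p : ℕ) :
    poch x (2*p+3) = x * (x + 2*(p:ℝ) + 1) * (x + 2*(p:ℝ) + 2) * poch (x+1) (2*p) := by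
  rw [show 2*p+3 = (2*p+2)+1 by omega, poch_succ, pochA]
  push_cast; ring

lemma pochD (x : ℝ) (p : ℕ) :
    poch x (2*p+3) = x * (x+1) * (x + 2*(p:ℝ) + 2) * poch (x+2) (2*p) := by
  rw [show 2*p+3 = (2*p+2)+1 by omega, poch_succ, pochC]
  push_cast; ring

lemma poch_zero (m : ℕ) : poch 0 (m+1) = 0 := by
  rw [poch_succ']; ring

lemma sphj_rec (z : ℝ) (hz : z ≠ 0) (n : ℕ) :
    z * sphj ((n:ℤ)+2) z = (2*(n:ℝ)+3) * sphj ((n:ℤ)+1) z - z * sphj (n:ℤ) z := by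
  have h1 : ((n:ℤ)+2+1).toNat = n+1+2 := by omega
  have h2 : ((n:ℤ)+1+1).toNat = n+2 := by omega
  have h3 : ((n:ℤ)+1).toNat = n+1 := by omega
  rw [sphj, sphj, sphj, h1, h2, h3]
  rw [show sphjAux z (n+1+2) = ((2 * ((n+1 : ℕ) : ℝ) + 1) / z) * sphjAux z (n+1+1) - sphjAux z (n+1) from rfl]
  have h : z * ((2 * ((n+1:ℕ) : ℝ) + 1) / z * sphjAux z (n+1+1)) = (2*(n:ℝ)+3) * sphjAux z (n+2) := by
    rw [← mul_assoc, mul_div_cancel₀ _ hz]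
    push_cast; ring_nf
  rw [mul_sub, h]

theorem aux_id (z : ℝ) (hz : z ≠ 0) (p ℓ : ℕ) (hpℓ : p ≤ ℓ) :
    (2 * (p : ℝ) + 3) *
        ∑ k ∈ Finset.Icc (p + 1) ℓ,
          (2 * (k : ℝ) + 1) * poch ((k : ℝ) - p) (2 * p + 2) * (sphj k z) ^ 2 =
      2 * ((p : ℝ) + 1) * z ^ 2 * ∑ k ∈ Finset.Icc p ℓ,
          (2 * (k : ℝ) + 1) * poch ((k : ℝ) - p + 1) (2 * p) * (sphj k z) ^ 2 -
        z ^ 2 * poch ((ℓ : ℝ) - p + 1) (2 * p + 2) * (sphj ℓ z) ^ 2 -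
        z ^ 2 * poch ((ℓ : ℝ) - p) (2 * p + 2) * (sphj (ℓ + 1) z) ^ 2 +
        2 * z * poch ((ℓ : ℝ) - p) (2 * p + 3) * sphj ℓ z * sphj (ℓ + 1) z := by
  induction ℓ, hpℓ using Nat.le_induction with
  | base =>
      rw [Finset.Icc_eq_empty (by omega : ¬ (p+1 ≤ p)), Finset.Icc_self, Finset.sum_singleton,
        Finset.sum_empty, show (p:ℝ) - ↑p = 0 by ring, show (0:ℝ)+1 = 1 by ring,
        pochT2 1 p, show 2*p+2 = (2*p+1)+1 by omega, show 2*p+3 = (2*p+2)+1 by omega,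
        poch_zero, poch_zero]
      ring
  | succ n hn IH =>
      rw [Finset.sum_Icc_succ_top (by omega : p + 1 ≤ n + 1),
          Finset.sum_Icc_succ_top (by omega : p ≤ n + 1)]
      push_cast
      rw [show ((n:ℤ)+1+1) = (n:ℤ)+2 by ring]
      have G1 : poch ((n:ℝ)+1-↑p) (2*p+2)
          = ((n:ℝ)-↑p+1)*((n:ℝ)+↑p+2) * poch ((n:ℝ)-↑p+2) (2*p) := by
        rw [pochA, show (n:ℝ)+1-↑p+1 = (n:ℝ)-↑p+2 by ring]; ring
      have G2 : poch ((n:ℝ)+1-↑p+1) (2*p) = poch ((n:ℝ)-↑p+2) (2*p) := by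
        rw [show (n:ℝ)+1-↑p+1 = (n:ℝ)-↑p+2 by ring]
      have G3 : poch ((n:ℝ)+1-↑p+1) (2*p+2)
          = ((n:ℝ)+↑p+2)*((n:ℝ)+↑p+3) * poch ((n:ℝ)-↑p+2) (2*p) := by
        rw [show (n:ℝ)+1-↑p+1 = (n:ℝ)-↑p+2 by ring, pochT2]; ring
      have G4 : poch ((n:ℝ)+1-↑p) (2*p+3)
          = ((n:ℝ)-↑p+1)*((n:ℝ)+↑p+2)*((n:ℝ)+↑p+3) * poch ((n:ℝ)-↑p+2) (2*p) := by
        rw [pochB, show (n:ℝ)+1-↑p+1 = (n:ℝ)-↑p+2 by ring]; ring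
      have I1 : poch ((n:ℝ)-↑p+1) (2*p+2)
          = ((n:ℝ)-↑p+1)*((n:ℝ)+↑p+2) * poch ((n:ℝ)-↑p+2) (2*p) := by
        rw [pochA, show (n:ℝ)-↑p+1+1 = (n:ℝ)-↑p+2 by ring]; ring
      have I2 : poch ((n:ℝ)-↑p) (2*p+2)
          = ((n:ℝ)-↑p)*((n:ℝ)-↑p+1) * poch ((n:ℝ)-↑p+2) (2*p) := by
        rw [pochC]
      have I3 : poch ((n:ℝ)-↑p) (2*p+3)
          = ((n:ℝ)-↑p)*((n:ℝ)-↑p+1)*((n:ℝ)+↑p+2) * poch ((n:ℝ)-↑p+2) (2*p) := by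
        rw [pochD]; ring
      rw [G1, G2, G3, G4] at *
      rw [I1, I2, I3] at IH
      linear_combination IH +
        (((n:ℝ)-↑p+1)*((n:ℝ)+↑p+2) * poch ((n:ℝ)-↑p+2) (2*p) *
            (z * sphj ((n:ℤ)+2) z + (2*(n:ℝ)+3) * sphj ((n:ℤ)+1) z - z * sphj (n:ℤ) z)
          - 2*((n:ℝ)-↑p+1)*((n:ℝ)+↑p+2)*((n:ℝ)+↑p+3) * poch ((n:ℝ)-↑p+2) (2*p) *
            sphj ((n:ℤ)+1) z) * (sphj_rec z hz n)

/-- Recurrence step of the second hierarchy of sum rules. -/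
theorem second_hierarchy_recurrence (z : ℝ) (hz : z ≠ 0) (p ℓ : ℕ) (hpℓ : p ≤ ℓ) :
    (2 * (p : ℝ) + 3) / (2 * ((p : ℝ) + 1)) *
        ∑ k ∈ Finset.Icc (p + 1) ℓ,
          (2 * (k : ℝ) + 1) * poch ((k : ℝ) - p) (2 * p + 2) * (sphj k z) ^ 2 =
      z ^ 2 * ∑ k ∈ Finset.Icc p ℓ,
          (2 * (k : ℝ) + 1) * poch ((k : ℝ) - p + 1) (2 * p) * (sphj k z) ^ 2 -
        z ^ 2 / (2 * ((p : ℝ) + 1)) * poch ((ℓ : ℝ) - p + 1) (2 * p + 2) * (sphj ℓ z) ^ 2 -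
        z ^ 2 / (2 * ((p : ℝ) + 1)) * poch ((ℓ : ℝ) - p) (2 * p + 2) * (sphj (ℓ + 1) z) ^ 2 +
        z / ((p : ℝ) + 1) * poch ((ℓ : ℝ) - p) (2 * p + 3) * sphj ℓ z * sphj (ℓ + 1) z := by
  have h := aux_id z hz p ℓ hpℓ
  have hp : ((p:ℝ)+1) ≠ 0 := by positivity
  field_simp
  linear_combination h
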